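/- Every entanglement-breaking channel Λ : L(H_E) → L(H_B) admits a representation Λ(ρ) = Σ_{i=1}^s ψ_i · tr(η̃_i ρ) where the ψ_i are pure states on H_B, {η̃_i} is a rank-1 POVM on H_E, and s ≤ (dim H_B · dim H_E)². -/

import Mathlib

open Matrix
open scoped Kronecker ComplexOrder

noncomputable section

variable {n : Type*} [Fintype n] [DecidableEq n]

/-- Square root of a positive semidefinite matrix (0 if not PSD). -/
def msqrt (M : Matrix n n ℂ) : Matrix n n ℂ := by
  classical exact if h : M.PosSemidef then
    (h.1.eigenvectorUnitary : Matrix n n ℂ) * diagonal ((↑) ∘ (√·) ∘ h.1.eigenvalues) *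
      (star h.1.eigenvectorUnitary : Matrix n n ℂ) else 0

/-- Trace norm ‖M‖₁ = tr √(M Mᴴ). -/
def traceNorm (M : Matrix n n ℂ) : ℝ := ((msqrt (M * Mᴴ)).trace).re

/-- Trace distance (1/2)‖ρ − σ‖₁. -/
def traceDist (ρ σ : Matrix n n ℂ) : ℝ := traceNorm (ρ - σ) / 2

/-- Uhlmann fidelity F(ρ,σ) = (tr √(√σ ρ √σ))². -/
def fidelity (ρ σ : Matrix n n ℂ) : ℝ :=
  (((msqrt (msqrt σ * ρ * msqrt σ)).trace).re) ^ 2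

/-- Density operator: positive semidefinite with unit trace. -/
def IsDensity (ρ : Matrix n n ℂ) : Prop := ρ.PosSemidef ∧ ρ.trace = 1

/-- Rank-one operator |v⟩⟨v| associated with a vector. -/
def vecState {α : Type*} (v : α → ℂ) : Matrix α α ℂ :=
  Matrix.of fun i j => v i * (starRingEnd ℂ) (v j)

/-- Pure state: |v⟩⟨v| for some unit vector v. -/
def IsPure {α : Type*} [Fintype α] (φ : Matrix α α ℂ) : Prop :=
  ∃ v : α → ℂ, (∑ i, Complex.normSq (v i)) = 1 ∧ φ = vecState v

/-- Set of separable states across the cut α : β. -/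
def SepSet (α β : Type*) [Fintype α] [Fintype β] : Set (Matrix (α × β) (α × β) ℂ) :=
  convexHull ℝ {σ | ∃ φ ψ, IsPure φ ∧ IsPure ψ ∧ σ = φ ⊗ₖ ψ}

variable {α β : Type*} [Fintype α] [Fintype β] [DecidableEq α] [DecidableEq β]

/-- Extension Γ ⊗ id of a linear map on matrices by a k-dimensional ancilla. -/
def lmapExt (Γ : Matrix α α ℂ →ₗ[ℂ] Matrix β β ℂ) (k : ℕ)
    (M : Matrix (α × Fin k) (α × Fin k) ℂ) : Matrix (β × Fin k) (β × Fin k) ℂ :=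
  Matrix.of fun im jn => Γ (Matrix.of fun p q => M (p, im.2) (q, jn.2)) im.1 jn.1

/-- Completely positive trace-preserving linear map. -/
def IsCPTP (Γ : Matrix α α ℂ →ₗ[ℂ] Matrix β β ℂ) : Prop :=
  (∀ (k : ℕ) (M : Matrix (α × Fin k) (α × Fin k) ℂ), M.PosSemidef →
    (lmapExt Γ k M).PosSemidef) ∧ (∀ M, (Γ M).trace = M.trace)

/-- Partial trace over the second tensor factor. -/
def ptrB (M : Matrix (α × β) (α × β) ℂ) : Matrix α α ℂ :=
  Matrix.of fun i j => ∑ m, M (i, m) (j, m)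

/-- Partial trace over the first tensor factor. -/
def ptrA (M : Matrix (α × β) (α × β) ℂ) : Matrix β β ℂ :=
  Matrix.of fun i j => ∑ m, M (m, i) (m, j)

/-- Choi operator J(Λ) = Σ_{i,j} |i⟩⟨j| ⊗ Λ(|i⟩⟨j|). -/
def choi (Λ : Matrix α α ℂ →ₗ[ℂ] Matrix β β ℂ) : Matrix (α × β) (α × β) ℂ :=
  Matrix.of fun p q => Λ (Matrix.single p.1 q.1 1) p.2 q.2

/-- Entanglement-breaking channel: all extended outputs are separable. -/
def IsEB (Λ : Matrix α α ℂ →ₗ[ℂ] Matrix β β ℂ) : Prop :=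
  IsCPTP Λ ∧ ∀ (k : ℕ) (ρ : Matrix (α × Fin k) (α × Fin k) ℂ), IsDensity ρ →
    lmapExt Λ k ρ ∈ SepSet β (Fin k)

end

/-!
Write `e⁻¹ J(Λ) = ∑ᵢ wᵢ φᵢ ⊗ ψᵢ` with pure `φᵢ, ψᵢ`. By Carathéodory the terms can be taken affinely
independent; they are Hermitian of trace one, and such matrices span a real space of dimension
`(be)²` on which the trace is a nonzero functional, so there are at most `(be)²` of them. Reading
the Choi decomposition entrywise gives `Λ ρ = ∑ᵢ tr((e wᵢ φᵢ)ᵀ ρ) ψᵢ`, and trace preservation forces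
the rank-one operators `(e wᵢ φᵢ)ᵀ` to sum to the identity.
-/

theorem vecState_eq_vecMulVec {α : Type*} (v : α → ℂ) : vecState v = vecMulVec v (star v) := rfl

namespace IsPure

variable {α : Type*} [Fintype α] {φ : Matrix α α ℂ}

theorem posSemidef (hφ : IsPure φ) : φ.PosSemidef := by
  obtain ⟨v, -, rfl⟩ := hφ
  exact posSemidef_vecMulVec_self_star v

theorem trace_eq_one (hφ : IsPure φ) : φ.trace = 1 := by
  obtain ⟨v, hv, rfl⟩ := hφ
  simp only [vecState_eq_vecMulVec, trace_vecMulVec, dotProduct, Pi.star_apply,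
    Complex.star_def, Complex.mul_conj]
  exact_mod_cast hv

theorem rank_transpose_smul_le_one (hφ : IsPure φ) (c : ℝ) : (c • φ)ᵀ.rank ≤ 1 := by
  obtain ⟨v, -, rfl⟩ := hφ
  rw [vecState_eq_vecMulVec, ← smul_vecMulVec, transpose_vecMulVec]
  exact rank_vecMulVec_le _ _

end IsPure

theorem AffineIndependent.linearIndependent_of_forall_eq_one {k V ι : Type*} [Ring k]
    [AddCommGroup V] [Module k V] {z : ι → V} (hz : AffineIndependent k z) (f : V →ₗ[k] k)
    (hf : ∀ i, f (z i) = 1) : LinearIndependent k z := by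
  rw [linearIndependent_iff']
  intro s g hg
  have hsum : ∑ i ∈ s, g i = 0 := by
    simpa [map_sum, hf] using congrArg f hg
  exact hz s g hsum (by rwa [Finset.weightedVSub_eq_linear_combination _ hsum])

namespace Matrix

variable {n : Type*}

/-- On Hermitian matrices the real part is symmetric and the imaginary part antisymmetric, so
`re + im` determines both. -/
def reAddIm : Matrix n n ℂ →ₗ[ℝ] Matrix n n ℝ := (Complex.reLm + Complex.imLm).mapMatrix

theorem IsHermitian.eq_zero_of_reAddIm_eq_zero {M : Matrix n n ℂ} (hM : M.IsHermitian)
    (h : reAddIm M = 0) : M = 0 := by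
  ext i j
  have hij := congrFun (congrFun h i) j
  have hji := congrFun (congrFun h j) i
  simp only [reAddIm, LinearMap.mapMatrix_apply, map_apply, LinearMap.add_apply,
    Complex.reLm_coe, Complex.imLm_coe, zero_apply] at hij hji
  rw [← hM.apply j i, Complex.star_def, Complex.conj_re, Complex.conj_im] at hji
  apply Complex.ext <;> simp only [zero_apply, Complex.zero_re, Complex.zero_im] <;> linarith

theorem card_le_sq_of_affineIndependent [Fintype n] {ι : Type*} [Fintype ι]
    {z : ι → Matrix n n ℂ} (hz : AffineIndependent ℝ z) (hherm : ∀ i, (z i).IsHermitian)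
    (htr : ∀ i, (z i).trace = 1) : Fintype.card ι ≤ Fintype.card n ^ 2 := by
  have hlin : LinearIndependent ℝ z :=
    hz.linearIndependent_of_forall_eq_one (Complex.reLm ∘ₗ traceLinearMap n ℝ ℂ)
      (by simp [htr])
  have hspan : Submodule.span ℝ (Set.range z) ≤ selfAdjoint.submodule ℝ (Matrix n n ℂ) :=
    Submodule.span_le.mpr (Set.range_subset_iff.mpr hherm)
  have hdisj : Disjoint (Submodule.span ℝ (Set.range z)) (LinearMap.ker reAddIm) :=
    Submodule.disjoint_def.mpr fun M hM hker =>
      IsHermitian.eq_zero_of_reAddIm_eq_zero (hspan hM) hker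
  calc Fintype.card ι ≤ Module.finrank ℝ (Matrix n n ℝ) :=
        (hlin.map hdisj).fintype_card_le_finrank
    _ = Fintype.card n ^ 2 := by simp [Module.finrank_matrix, sq]

end Matrix

section Choi

variable {α β ι : Type*} [DecidableEq α] [Fintype ι]
  {Λ : Matrix α α ℂ →ₗ[ℂ] Matrix β β ℂ} {A : ι → Matrix α α ℂ} {B : ι → Matrix β β ℂ}

theorem apply_single_eq_sum_of_choi_eq_sum (h : choi Λ = ∑ i, A i ⊗ₖ B i) (p q : α) :
    Λ (single p q 1) = ∑ i, A i p q • B i := by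
  ext k l
  simpa [choi, Matrix.sum_apply] using congrFun (congrFun h (p, k)) (q, l)

theorem apply_eq_sum_of_choi_eq_sum [Fintype α] (h : choi Λ = ∑ i, A i ⊗ₖ B i)
    (ρ : Matrix α α ℂ) : Λ ρ = ∑ i, ((A i)ᵀ * ρ).trace • B i := by
  have hsingle : ∀ p q, single p q (ρ p q) = ρ p q • single p q 1 := by simp
  conv_lhs => rw [matrix_eq_sum_single ρ]
  simp only [hsingle, map_sum, map_smul, apply_single_eq_sum_of_choi_eq_sum h,
    Finset.smul_sum, smul_smul, trace, diag, mul_apply, transpose_apply, Finset.sum_smul]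
  simp only [mul_comm (ρ _ _)]
  rw [Finset.sum_comm]
  simp_rw [Finset.sum_comm (γ := ι)]

theorem sum_transpose_eq_one_of_choi_eq_sum [Fintype α] [Fintype β]
    (hTP : ∀ M, (Λ M).trace = M.trace) (h : choi Λ = ∑ i, A i ⊗ₖ B i)
    (hB : ∀ i, (B i).trace = 1) : ∑ i, (A i)ᵀ = 1 := by
  ext p q
  have htr := hTP (single q p 1)
  simp only [apply_single_eq_sum_of_choi_eq_sum h, trace_sum, trace_smul, hB, smul_eq_mul,
    mul_one] at htr
  rw [Matrix.sum_apply, one_apply]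
  simp only [transpose_apply, htr]
  split_ifs with hpq
  · rw [hpq, trace_single_eq_same]
  · exact trace_single_eq_of_ne _ _ _ (Ne.symm hpq)

end Choi

theorem eb_measure_and_prepare {e b : ℕ} (he : 0 < e)
    (Λ : Matrix (Fin e) (Fin e) ℂ →ₗ[ℂ] Matrix (Fin b) (Fin b) ℂ)
    (hcptp : IsCPTP Λ) (hchoi : (e : ℝ)⁻¹ • choi Λ ∈ SepSet (Fin e) (Fin b)) :
    ∃ s : ℕ, s ≤ (b * e) ^ 2 ∧
      ∃ (ψ : Fin s → Matrix (Fin b) (Fin b) ℂ) (η : Fin s → Matrix (Fin e) (Fin e) ℂ),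
        (∀ i, IsPure (ψ i)) ∧ (∀ i, (η i).PosSemidef) ∧ (∀ i, (η i).rank ≤ 1) ∧
          (∑ i, η i = 1) ∧ ∀ ρ, Λ ρ = ∑ i, ((η i * ρ).trace) • ψ i := by
  obtain ⟨ι, _, z, w, hzS, hz, hw, -, hzw⟩ := eq_pos_convex_span_of_mem_convexHull hchoi
  choose φ ψ hφ hψ hzφψ using fun i => hzS (Set.mem_range_self i)
  set A : ι → Matrix (Fin e) (Fin e) ℂ := fun i => (e * w i : ℝ) • φ i
  have hA : ∀ i, 0 ≤ (e * w i : ℝ) := fun i => mul_nonneg e.cast_nonneg (hw i).le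
  have hJ : choi Λ = ∑ i, A i ⊗ₖ ψ i := by
    rw [← smul_inv_smul₀ (Nat.cast_ne_zero.mpr he.ne' : (e : ℝ) ≠ 0) (choi Λ), ← hzw,
      Finset.smul_sum]
    simp only [A, hzφψ, smul_kronecker, smul_smul]
  have hcard : Fintype.card ι ≤ (b * e) ^ 2 := by
    have := card_le_sq_of_affineIndependent hz
      (fun i => hzφψ i ▸ ((hφ i).posSemidef.kronecker (hψ i).posSemidef).isHermitian)
      (fun i => by rw [hzφψ, trace_kronecker, (hφ i).trace_eq_one, (hψ i).trace_eq_one, mul_one])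
    simpa [mul_comm] using this
  let π := (Fintype.equivFin ι).symm
  refine ⟨Fintype.card ι, hcard, ψ ∘ π, fun j => (A (π j))ᵀ, fun j => hψ _,
    fun j => ((hφ _).posSemidef.smul (hA _)).transpose,
    fun j => (hφ _).rank_transpose_smul_le_one _, ?_, fun ρ => ?_⟩
  · exact (Equiv.sum_comp π fun i => (A i)ᵀ).trans
      (sum_transpose_eq_one_of_choi_eq_sum hcptp.2 hJ fun i => (hψ i).trace_eq_one)
  · exact (apply_eq_sum_of_choi_eq_sum hJ ρ).trans (Equiv.sum_comp π _).symm
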